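/- arXiv:2305.04544 — 6 statements merged into one kernel-verified Lean document; each statement's English description precedes it below -/
import Mathlib

section
/- For every n ≥ 1, the maximum cardinality of a domino configuration in the square S_n equals ξ(n), where ξ(n) = (n−1)(n+3)/6 if n ≡ 1 or 3 (mod 6), ξ(n) = (n+1)²/6 if n ≡ 5 (mod 6), ξ(n) = n(n+2)/6 if n ≡ 0 or 4 (mod 6), and ξ(n) = (n(n+2) − 2)/6 if n ≡ 2 (mod 6). That is: there exists a domino configuration in S_n of cardinality ξ(n), and every domino configuration in S_n has cardinality at most ξ(n). -/
/-- The Moore neighborhood of range 1 of a point `ω ∈ ℤ²`. -/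
def moore (ω : ℤ × ℤ) : Set (ℤ × ℤ) :=
  {x | |x.1 - ω.1| ≤ 1 ∧ |x.2 - ω.2| ≤ 1}

/-- The kernel of a domino `(ω, e)`: the two cells `ω` and `ω + e`. -/
def kernel (d : (ℤ × ℤ) × (ℤ × ℤ)) : Set (ℤ × ℤ) :=
  {d.1, d.1 + d.2}

/-- The footprint of a domino `(ω, e)`: the union of the Moore neighborhoods
of its two kernel cells (kernel together with the 10-cell hull). -/
def footprint (d : (ℤ × ℤ) × (ℤ × ℤ)) : Set (ℤ × ℤ) :=
  moore d.1 ∪ moore (d.1 + d.2)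

/-- A domino configuration in the square `S_n`: a finite set of dominos
(each a pair `(ω, e)` with `e ∈ {(1,0), (0,1)}`) whose kernels lie in
`{1, …, n} × {1, …, n}`, such that the footprint of any domino is disjoint
from the kernel of any other domino (hull–kernel exclusion). -/
def IsSquareConfig (n : ℕ) (C : Finset ((ℤ × ℤ) × (ℤ × ℤ))) : Prop :=
  (∀ d ∈ C, d.2 = (1, 0) ∨ d.2 = (0, 1)) ∧
  (∀ d ∈ C, kernel d ⊆ {p : ℤ × ℤ | 1 ≤ p.1 ∧ p.1 ≤ (n : ℤ) ∧ 1 ≤ p.2 ∧ p.2 ≤ (n : ℤ)}) ∧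
  (∀ d ∈ C, ∀ d' ∈ C, d ≠ d' → footprint d ∩ kernel d' = ∅)

/-- The maximal number of dominos in the square `S_n`. -/
def xi (n : ℕ) : ℕ :=
  if n % 6 = 1 ∨ n % 6 = 3 then (n - 1) * (n + 3) / 6
  else if n % 6 = 5 then (n + 1) ^ 2 / 6
  else if n % 6 = 2 then (n * (n + 2) - 2) / 6
  else n * (n + 2) / 6

/-!
Attach to a domino the block of cells `p` with `p ≤ k ≤ p + (1, 1)` for some kernel cell `k`:
a 3 × 2 or 2 × 3 rectangle with the kernel in its upper right corner. Two cells are Moore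
neighbours iff they lie in a common 2 × 2 square, so the exclusion rule between two dominos says
exactly that their blocks are disjoint. Configurations in `S_n` are therefore packings of
`[0, n]²` by blocks, and there are at most `⌊(n + 1)² / 6⌋ = ξ(n)` of them. Packings of that
size are built recursively: `[0, n + 6]²` is `[0, n]²` plus two strips of width 6, and a strip
of width 6 and height at least 2 is a stack of 6 × 2 and 6 × 3 rectangles, each cut into blocks.
-/

open Finset

abbrev Domino := (ℤ × ℤ) × (ℤ × ℤ)

def IsOriented (d : Domino) : Prop := d.2 = (1, 0) ∨ d.2 = (0, 1)

instance : DecidablePred IsOriented := fun _ => inferInstanceAs (Decidable (_ ∨ _))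

noncomputable def block (d : Domino) : Finset (ℤ × ℤ) := Icc (d.1 - (1, 1)) (d.1 + d.2)

lemma mem_block_iff {d : Domino} (hd : IsOriented d) {p : ℤ × ℤ} :
    p ∈ block d ↔ ∃ k ∈ kernel d, p ≤ k ∧ k ≤ p + (1, 1) := by
  obtain ⟨⟨a, b⟩, e⟩ := d
  rcases hd with rfl | rfl <;> simp [block, kernel, Prod.le_def] <;> omega

lemma card_block {d : Domino} (hd : IsOriented d) : #(block d) = 6 := by
  obtain ⟨⟨a, b⟩, e⟩ := d
  rcases hd with rfl | rfl <;> simp [block, card_Icc_prod] <;> omega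

lemma mem_moore_iff {x c : ℤ × ℤ} :
    x ∈ moore c ↔ ∃ p, p ≤ x ∧ x ≤ p + (1, 1) ∧ p ≤ c ∧ c ≤ p + (1, 1) := by
  simp only [moore, Set.mem_ofPred_eq, abs_le, Prod.le_def, Prod.fst_add, Prod.snd_add]
  constructor
  · intro h
    exact ⟨x ⊓ c, by simp only [Prod.fst_inf, Prod.snd_inf]; omega⟩
  · rintro ⟨p, h⟩
    omega

lemma mem_footprint_iff {d : Domino} {x : ℤ × ℤ} :
    x ∈ footprint d ↔ ∃ k ∈ kernel d, x ∈ moore k := by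
  simp [footprint, kernel]

lemma footprint_inter_kernel_eq_empty_iff {d d' : Domino} (hd : IsOriented d)
    (hd' : IsOriented d') : footprint d ∩ kernel d' = ∅ ↔ Disjoint (block d) (block d') := by
  rw [Set.eq_empty_iff_forall_notMem, Finset.disjoint_left]
  constructor
  · intro h p hp hp'
    obtain ⟨k, hk, hpk⟩ := (mem_block_iff hd).1 hp
    obtain ⟨k', hk', hpk'⟩ := (mem_block_iff hd').1 hp'
    exact h k' ⟨mem_footprint_iff.2 ⟨k, hk, mem_moore_iff.2 ⟨p, hpk'.1, hpk'.2, hpk.1, hpk.2⟩⟩, hk'⟩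
  · rintro h x ⟨hx, hx'⟩
    obtain ⟨k, hk, hxk⟩ := mem_footprint_iff.1 hx
    obtain ⟨p, hpx, hxp, hpk, hkp⟩ := mem_moore_iff.1 hxk
    exact h ((mem_block_iff hd).2 ⟨k, hk, hpk, hkp⟩) ((mem_block_iff hd').2 ⟨x, hx', hpx, hxp⟩)

lemma kernel_subset_square_iff {d : Domino} (hd : IsOriented d) (n : ℕ) :
    kernel d ⊆ {p : ℤ × ℤ | 1 ≤ p.1 ∧ p.1 ≤ (n : ℤ) ∧ 1 ≤ p.2 ∧ p.2 ≤ (n : ℤ)} ↔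
      block d ⊆ Icc 0 (n, n) := by
  obtain ⟨⟨a, b⟩, e⟩ := d
  rw [block, Icc_subset_Icc_iff (by rcases hd with rfl | rfl <;> simp [Prod.le_def] <;> omega)]
  rcases hd with rfl | rfl <;> simp [kernel, Set.insert_subset_iff, Prod.le_def] <;> omega

def IsBlockPacking (R : Finset (ℤ × ℤ)) (C : Finset Domino) : Prop :=
  (∀ d ∈ C, IsOriented d) ∧ (∀ d ∈ C, block d ⊆ R) ∧
    ∀ d ∈ C, ∀ d' ∈ C, d ≠ d' → Disjoint (block d) (block d')

noncomputable instance (R : Finset (ℤ × ℤ)) (C : Finset Domino) :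
    Decidable (IsBlockPacking R C) :=
  inferInstanceAs (Decidable (_ ∧ _ ∧ _))

lemma isSquareConfig_iff {n : ℕ} {C : Finset Domino} :
    IsSquareConfig n C ↔ IsBlockPacking (Icc 0 (n, n)) C :=
  and_congr_right fun hC => and_congr
    (forall₂_congr fun d hd => kernel_subset_square_iff (hC d hd) n)
    (forall₂_congr fun d hd => forall₂_congr fun d' hd' => imp_congr_right fun _ =>
      footprint_inter_kernel_eq_empty_iff (hC d hd) (hC d' hd'))

namespace IsBlockPacking

variable {R S : Finset (ℤ × ℤ)} {C C' : Finset Domino}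

lemma mono (h : IsBlockPacking R C) (hRS : R ⊆ S) : IsBlockPacking S C :=
  ⟨h.1, fun d hd => (h.2.1 d hd).trans hRS, h.2.2⟩

lemma six_mul_card_le (h : IsBlockPacking R C) : 6 * #C ≤ #R :=
  calc 6 * #C = #(C.biUnion block) := by
        rw [card_biUnion fun d hd d' hd' => h.2.2 d hd d' hd',
          sum_congr rfl fun d hd => card_block (h.1 d hd), sum_const, smul_eq_mul, mul_comm]
    _ ≤ #R := card_le_card (biUnion_subset.2 h.2.1)

lemma disjoint (h : IsBlockPacking R C) (h' : IsBlockPacking S C') (hRS : Disjoint R S) :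
    Disjoint C C' := by
  refine Finset.disjoint_left.2 fun d hd hd' => ?_
  have hne : (block d).Nonempty := card_pos.1 (by rw [card_block (h.1 d hd)]; norm_num)
  exact hne.ne_empty ((Finset.disjoint_self_iff_empty _).1 (hRS.mono (h.2.1 d hd) (h'.2.1 d hd')))

lemma union (h : IsBlockPacking R C) (h' : IsBlockPacking S C') (hRS : Disjoint R S) :
    IsBlockPacking (R ∪ S) (C ∪ C') := by
  have cross : ∀ d ∈ C, ∀ d' ∈ C', Disjoint (block d) (block d') := fun d hd d' hd' =>
    hRS.mono (h.2.1 d hd) (h'.2.1 d' hd')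
  refine ⟨fun d hd => ?_, fun d hd => ?_, fun d hd d' hd' hne => ?_⟩
  · rcases mem_union.1 hd with hd | hd
    exacts [h.1 d hd, h'.1 d hd]
  · rcases mem_union.1 hd with hd | hd
    exacts [(h.2.1 d hd).trans subset_union_left, (h'.2.1 d hd).trans subset_union_right]
  · rcases mem_union.1 hd with hd | hd <;> rcases mem_union.1 hd' with hd' | hd'
    exacts [h.2.2 d hd d' hd' hne, cross d hd d' hd', (cross d' hd' d hd).symm,
      h'.2.2 d hd d' hd' hne]

end IsBlockPacking

def BlockPackable (R : Finset (ℤ × ℤ)) (k : ℕ) : Prop :=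
  ∃ C, IsBlockPacking R C ∧ #C = k

lemma map_prodComm_Icc (a b : ℤ × ℤ) :
    (Icc a b).map (Equiv.prodComm ℤ ℤ).toEmbedding = Icc a.swap b.swap := by
  ext p
  simp [Prod.le_def]
  tauto

namespace BlockPackable

variable {R S T : Finset (ℤ × ℤ)} {k l : ℕ}

lemma union (h : BlockPackable R k) (h' : BlockPackable S l) (hRS : Disjoint R S)
    (hT : R ∪ S ⊆ T) : BlockPackable T (k + l) := by
  obtain ⟨C, hC, rfl⟩ := h
  obtain ⟨C', hC', rfl⟩ := h'
  exact ⟨C ∪ C', (hC.union hC' hRS).mono hT, card_union_of_disjoint (hC.disjoint hC' hRS)⟩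

lemma map (h : BlockPackable R k) (f : ℤ × ℤ ↪ ℤ × ℤ) {g : Domino → Domino}
    (hg : Function.Injective g)
    (hfg : ∀ d, IsOriented d → IsOriented (g d) ∧ block (g d) = (block d).map f) :
    BlockPackable (R.map f) k := by
  obtain ⟨C, ⟨hC, hCR, hdisj⟩, rfl⟩ := h
  refine ⟨C.image g, ⟨?_, ?_, ?_⟩, card_image_of_injective C hg⟩ <;> simp only [forall_mem_image]
  · exact fun d hd => (hfg d (hC d hd)).1
  · intro d hd
    rw [(hfg d (hC d hd)).2]
    exact map_subset_map.2 (hCR d hd)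
  · intro d hd d' hd' hne
    rw [(hfg d (hC d hd)).2, (hfg d' (hC d' hd')).2, disjoint_map]
    exact hdisj d hd d' hd' (ne_of_apply_ne g hne)

lemma translate {a b : ℤ × ℤ} (h : BlockPackable (Icc a b) k) (v : ℤ × ℤ) :
    BlockPackable (Icc (a + v) (b + v)) k := by
  rw [← map_add_right_Icc]
  refine h.map _ (g := Prod.map (· + v) id)
    (Prod.map_injective.2 ⟨add_left_injective v, Function.injective_id⟩) fun d hd => ⟨hd, ?_⟩
  rw [block, block, map_add_right_Icc]
  congr 1 <;> simp only [Prod.map_fst, Prod.map_snd, id] <;> abel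

lemma swap {a b : ℤ × ℤ} (h : BlockPackable (Icc a b) k) :
    BlockPackable (Icc a.swap b.swap) k := by
  rw [← map_prodComm_Icc]
  refine h.map _ (g := Prod.map Prod.swap Prod.swap)
    (Prod.map_injective.2 ⟨Prod.swap_injective, Prod.swap_injective⟩) fun d hd => ⟨?_, ?_⟩
  · rcases hd with hd | hd <;> simp [IsOriented, hd]
  · rw [block, block, map_prodComm_Icc]
    rfl

end BlockPackable

lemma blockPackable_strip : ∀ h : ℕ, BlockPackable (Icc 0 (5, (h : ℤ) + 1)) (h + 2)
  | 0 => ⟨{((1, 1), (1, 0)), ((4, 1), (1, 0))}, by decide, rfl⟩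
  | 1 => ⟨{((1, 1), (0, 1)), ((3, 1), (0, 1)), ((5, 1), (0, 1))}, by decide, rfl⟩
  | h + 2 => by
    rw [show h + 2 + 2 = 2 + (h + 2) by omega]
    refine (blockPackable_strip 0).union ((blockPackable_strip h).translate (0, 2)) ?_ ?_
    · simp [disjoint_left, Prod.le_def]
      omega
    · intro p
      simp [Prod.le_def]
      omega

lemma blockPackable_square : ∀ n : ℕ, BlockPackable (Icc 0 (n, n)) ((n + 1) ^ 2 / 6)
  | 0 => ⟨∅, by decide, rfl⟩
  | 1 => ⟨∅, by decide, rfl⟩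
  | 2 => ⟨{((1, 1), (1, 0))}, by decide, rfl⟩
  | 3 => ⟨{((1, 1), (1, 0)), ((1, 3), (1, 0))}, by decide, rfl⟩
  | 4 => ⟨{((1, 1), (1, 0)), ((4, 1), (0, 1)), ((3, 4), (1, 0)), ((1, 3), (0, 1))},
      by decide, rfl⟩
  | 5 => ⟨{((1, 1), (1, 0)), ((4, 1), (1, 0)), ((1, 3), (1, 0)), ((4, 3), (1, 0)),
      ((1, 5), (1, 0)), ((4, 5), (1, 0))}, by decide, rfl⟩
  | 6 => ⟨{((1, 1), (1, 0)), ((1, 3), (1, 0)), ((1, 5), (0, 1)), ((3, 5), (0, 1)),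
      ((4, 1), (0, 1)), ((5, 4), (1, 0)), ((5, 6), (1, 0)), ((6, 1), (0, 1))}, by decide, rfl⟩
  | m + 7 => by
    have hcount : (m + 7 + 1) ^ 2 / 6 = (m + 1 + 1) ^ 2 / 6 + (m + 2) + (m + 6 + 2) := by
      rw [show (m + 7 + 1) ^ 2 = (m + 1 + 1) ^ 2 + 6 * (2 * m + 10) by ring,
        Nat.add_mul_div_left _ _ (by norm_num)]
      ring
    have hsquare := blockPackable_square (m + 1)
    have hright := (blockPackable_strip m).translate ((m : ℤ) + 2, 0)
    have htop := (blockPackable_strip (m + 6)).swap.translate (0, (m : ℤ) + 2)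
    have hbottom : BlockPackable (Icc 0 ((m : ℤ) + 7, (m : ℤ) + 1)) _ :=
      hsquare.union hright (by simp [disjoint_left, Prod.le_def]; omega)
        (by intro p; simp [Prod.le_def]; omega)
    rw [hcount]
    exact hbottom.union htop (by simp [disjoint_left, Prod.le_def]; omega)
      (by intro p; simp [Prod.le_def]; omega)

lemma xi_eq (n : ℕ) : xi n = (n + 1) ^ 2 / 6 := by
  obtain ⟨k, r, hr, rfl⟩ : ∃ k r, r < 6 ∧ n = 6 * k + r :=
    ⟨n / 6, n % 6, Nat.mod_lt _ (by norm_num), (Nat.div_add_mod n 6).symm⟩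
  interval_cases r <;> simp [xi, Nat.add_mod] <;> ring_nf <;> omega

lemma card_Icc_square (n : ℕ) : #(Icc (0 : ℤ × ℤ) (n, n)) = (n + 1) ^ 2 := by
  simp [card_Icc_prod, sq]

theorem max_dominos_in_square_general (n : ℕ) :
    (∃ C : Finset ((ℤ × ℤ) × (ℤ × ℤ)), IsSquareConfig n C ∧ C.card = xi n) ∧
    (∀ C : Finset ((ℤ × ℤ) × (ℤ × ℤ)), IsSquareConfig n C → C.card ≤ xi n) := by
  simp only [isSquareConfig_iff, xi_eq]
  refine ⟨blockPackable_square n, fun C hC => ?_⟩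
  have hcard := hC.six_mul_card_le
  rw [card_Icc_square] at hcard
  rw [Nat.le_div_iff_mul_le (by norm_num)]
  omega

/-- For every `n ≥ 1`, the maximum cardinality of a domino configuration in the
square `S_n` equals `ξ n`: some configuration attains `ξ n`, and every
configuration has at most `ξ n` dominos. -/
theorem max_dominos_in_square (n : ℕ) (hn : 1 ≤ n) :
    (∃ C : Finset ((ℤ × ℤ) × (ℤ × ℤ)), IsSquareConfig n C ∧ C.card = xi n) ∧
    (∀ C : Finset ((ℤ × ℤ) × (ℤ × ℤ)), IsSquareConfig n C → C.card ≤ xi n) :=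
  max_dominos_in_square_general n
end

section
/- For every p ∈ ℕ, setting m = 3p, n = 2m + 1 = 6p + 1 and μ = p mod 2, the following identity of rational numbers holds (all quantities involved are integers): [m²/6 if μ = 0, and (m−3)(m+1)/6 if μ = 1] + 4·((p + μ)(3p + 2 − μ)/8) = p(3p + 1) = (n − 1)(n + 1)/12. -/
/-- Class 10 (`n` odd, `m = 3p`, `n = 2m + 1 = 6p + 1`, `μ = p mod 2`):
the capacity identity `ξ_{f₁₀(m)} + 4·W₁₀(p) = p(3p + 1) = (n − 1)(n + 1)/12`,
where `ξ_{f₁₀(m)} = m²/6` if `μ = 0` and `(m−3)(m+1)/6` if `μ = 1`, and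
`W₁₀(p) = (p + μ)(3p + 2 - μ)/8`. -/
theorem psi_class_10 (p m n μ : ℕ) (hm : m = 3 * p) (hn : n = 2 * m + 1)
    (hμ : μ = p % 2) :
    (if μ = 0 then (m : ℚ) ^ 2 / 6 else ((m : ℚ) - 3) * ((m : ℚ) + 1) / 6)
        + 4 * (((p : ℚ) + (μ : ℚ)) * (3 * (p : ℚ) + 2 - (μ : ℚ)) / 8)
      = (p : ℚ) * (3 * (p : ℚ) + 1) ∧
    (p : ℚ) * (3 * (p : ℚ) + 1) = ((n : ℚ) - 1) * ((n : ℚ) + 1) / 12 := by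
  subst hm hn hμ
  constructor
  · rcases Nat.even_or_odd p with ⟨k, hk⟩ | ⟨k, hk⟩ <;> subst hk
    · have h : (k + k) % 2 = 0 := by omega
      rw [h]; simp; ring
    · have h : (2 * k + 1) % 2 = 1 := by omega
      rw [h]; simp; ring
  · push_cast; ring
end

section
/- For every p ∈ ℕ, setting m = 3p + 2, n = 2m + 1 = 6p + 5 and μ = p mod 2, the following identity of rational numbers holds (all quantities involved are integers): [m(m+4)/6 if μ = 0, and (m+1)²/6 if μ = 1] + 4·((p + μ)(3p + 2 − μ)/8) = (3p + 2)(p + 1) = (n − 1)(n + 1)/12. -/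
/-- Class 12 (`n` odd, `m = 3p + 2`, `n = 2m + 1 = 6p + 5`, `μ = p mod 2`):
the capacity identity `ξ_{f₁₂(m)} + 4·W₁₂(p) = (3p + 2)(p + 1) = (n − 1)(n + 1)/12`,
where `ξ_{f₁₂(m)} = m(m+4)/6` if `μ = 0` and `(m+1)²/6` if `μ = 1`, and
`W₁₂(p) = (p + μ)(3p + 2 − μ)/8`. -/
theorem psi_class_12 (p m n μ : ℕ) (hm : m = 3 * p + 2) (hn : n = 2 * m + 1)
    (hμ : μ = p % 2) :
    (if μ = 0 then (m : ℚ) * ((m : ℚ) + 4) / 6 else ((m : ℚ) + 1) ^ 2 / 6)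
        + 4 * (((p : ℚ) + (μ : ℚ)) * (3 * (p : ℚ) + 2 - (μ : ℚ)) / 8)
      = (3 * (p : ℚ) + 2) * ((p : ℚ) + 1) ∧
    (3 * (p : ℚ) + 2) * ((p : ℚ) + 1) = ((n : ℚ) - 1) * ((n : ℚ) + 1) / 12 := by
  subst hm hn hμ
  constructor
  · rcases Nat.mod_two_eq_zero_or_one p with h | h <;> simp [h] <;> push_cast <;> ring
  · push_cast; ring
end

section
/- Define ψ on the multiples of 6 by ψ(0) = 0 and, for p ≥ 1 with n = 6p and r = (p + 1) mod 4, ψ(n) = ψ(n − 6) + (n − 2) if r = 0, ψ(n) = ψ(n − 6) + (n − 4) if r = 1, and ψ(n) = ψ(n − 6) + (n − 1) if r = 2 or r = 3. Then for every p ≥ 1 with n = 6p and r = (p + 1) mod 4, ψ(n) = (n² + 2n + 24)/12 if r = 0 or r = 3, ψ(n) = (n² + 2n)/12 if r = 1, and ψ(n) = (n² + 2n + 12)/12 if r = 2. In particular ψ(n) − ψ(n − 24) = 4(n − 11) for all p ≥ 4. -/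
/-- Class 00 (`n = 6p`): if `ψ 0 = 0` and, for `p ≥ 1` with `n = 6p` and
`r = (p + 1) mod 4`, the increments `ψ n − ψ (n−6)` are `n−2`, `n−4`, `n−1`, `n−1`
according to `r = 0, 1, 2, 3`, then `ψ n = (n² + 2n + 24)/12` if `r = 0` or `r = 3`,
`ψ n = (n² + 2n)/12` if `r = 1`, `ψ n = (n² + 2n + 12)/12` if `r = 2`; in particular
`ψ n − ψ (n − 24) = 4(n − 11)` for all `p ≥ 4`. -/
theorem psi_diamond_class_00 (ψ : ℕ → ℕ) (h0 : ψ 0 = 0)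
    (hrec : ∀ p : ℕ, 1 ≤ p →
      ((p + 1) % 4 = 0 → ψ (6 * p) = ψ (6 * p - 6) + (6 * p - 2)) ∧
      ((p + 1) % 4 = 1 → ψ (6 * p) = ψ (6 * p - 6) + (6 * p - 4)) ∧
      ((p + 1) % 4 = 2 ∨ (p + 1) % 4 = 3 →
        ψ (6 * p) = ψ (6 * p - 6) + (6 * p - 1))) :
    (∀ p : ℕ, 1 ≤ p →
      (((p + 1) % 4 = 0 ∨ (p + 1) % 4 = 3) →
        ψ (6 * p) = ((6 * p) ^ 2 + 2 * (6 * p) + 24) / 12) ∧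
      ((p + 1) % 4 = 1 → ψ (6 * p) = ((6 * p) ^ 2 + 2 * (6 * p)) / 12) ∧
      ((p + 1) % 4 = 2 → ψ (6 * p) = ((6 * p) ^ 2 + 2 * (6 * p) + 12) / 12)) ∧
    (∀ p : ℕ, 4 ≤ p → ψ (6 * p) - ψ (6 * p - 24) = 4 * (6 * p - 11)) := by
  have key : ∀ p : ℕ, 1 ≤ p → ψ (6 * p) =
      3 * (p * p) + p +
        (if (p + 1) % 4 = 1 then 0 else if (p + 1) % 4 = 2 then 1 else 2) := by
    intro p hp
    induction p with
    | zero => omega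
    | succ k ih =>
      rcases Nat.lt_or_ge k 1 with hk | hk
      · have hk0 : k = 0 := by omega
        subst hk0
        obtain ⟨-, -, h2⟩ := hrec 1 le_rfl
        have h2' := h2 (by norm_num)
        norm_num at h2' ⊢
        omega
      · have ih' := ih hk
        obtain ⟨ha, hb, hc⟩ := hrec (k + 1) (by omega)
        have h6 : 6 * (k + 1) - 6 = 6 * k := by omega
        rw [h6] at ha hb hc
        have hsq : (k + 1) * (k + 1) = k * k + 2 * k + 1 := by ring
        have h4 : (k + 1 + 1) % 4 = 0 ∨ (k + 1 + 1) % 4 = 1 ∨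
            (k + 1 + 1) % 4 = 2 ∨ (k + 1 + 1) % 4 = 3 := by omega
        generalize hA : k * k = A at ih' hsq
        generalize hB : (k + 1) * (k + 1) = B at hsq ⊢
        rcases h4 with h | h | h | h
        · have heq := ha h
          split_ifs at ih' ⊢ <;> omega
        · have heq := hb h
          split_ifs at ih' ⊢ <;> omega
        · have heq := hc (Or.inl h)
          split_ifs at ih' ⊢ <;> omega
        · have heq := hc (Or.inr h)
          split_ifs at ih' ⊢ <;> omega
  constructor
  · intro p hp
    have k1 := key p hp
    have hsq : (6 * p) ^ 2 = 36 * (p * p) := by ring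
    generalize hA : p * p = A at k1 hsq
    refine ⟨fun h => ?_, fun h => ?_, fun h => ?_⟩ <;>
      · rw [hsq]
        split_ifs at k1 <;> omega
  · intro p hp
    obtain ⟨q, rfl⟩ : ∃ q, p = q + 4 := ⟨p - 4, by omega⟩
    have k1 := key (q + 4) (by omega)
    have h24 : 6 * (q + 4) - 24 = 6 * q := by omega
    rw [h24]
    have hsq : (q + 4) * (q + 4) = q * q + 8 * q + 16 := by ring
    rcases Nat.lt_or_ge q 1 with hq | hq
    · have hq0 : q = 0 := by omega
      subst hq0
      norm_num at k1 ⊢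
      omega
    · have k2 := key q hq
      generalize hA : q * q = A at k1 k2 hsq
      generalize hB : (q + 4) * (q + 4) = B at k1 hsq
      split_ifs at k1 k2 <;> omega
end

section
/- Define ψ on the natural numbers congruent to 4 mod 6 by ψ(10) = 12 and, for p ≥ 2 with n = 6p + 4 and r = (p − 1) mod 4, ψ(n) = ψ(n − 6) + (n − 2) if r = 0, ψ(n) = ψ(n − 6) + (n − 3) if r = 1 or r = 2, and ψ(n) = ψ(n − 6) + n if r = 3. Then for every p ≥ 1 with n = 6p + 4 and r = (p − 1) mod 4, ψ(n) = (n² + 2n + 24)/12 if r = 0 or r = 3, ψ(n) = (n² + 2n + 12)/12 if r = 1, and ψ(n) = (n² + 2n)/12 if r = 2. In particular ψ(n) − ψ(n − 24) = 4(n − 11) for all p > 4. -/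
/-- Class 02 (`n = 6p + 4`): if `ψ 10 = 12` and, for `p ≥ 2` with `n = 6p + 4` and
`r = (p − 1) mod 4`, the increments `ψ n − ψ (n−6)` are `n−2`, `n−3`, `n−3`, `n`
according to `r = 0, 1, 2, 3`, then for every `p ≥ 1`, `ψ n = (n² + 2n + 24)/12` if
`r = 0` or `r = 3`, `ψ n = (n² + 2n + 12)/12` if `r = 1`, `ψ n = (n² + 2n)/12` if
`r = 2`; in particular `ψ n − ψ (n − 24) = 4(n − 11)` for all `p > 4`. -/
theorem psi_diamond_class_02 (ψ : ℕ → ℕ) (h10 : ψ 10 = 12)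
    (hrec : ∀ p : ℕ, 2 ≤ p →
      ((p - 1) % 4 = 0 → ψ (6 * p + 4) = ψ (6 * p + 4 - 6) + (6 * p + 4 - 2)) ∧
      ((p - 1) % 4 = 1 ∨ (p - 1) % 4 = 2 →
        ψ (6 * p + 4) = ψ (6 * p + 4 - 6) + (6 * p + 4 - 3)) ∧
      ((p - 1) % 4 = 3 → ψ (6 * p + 4) = ψ (6 * p + 4 - 6) + (6 * p + 4))) :
    (∀ p : ℕ, 1 ≤ p →
      (((p - 1) % 4 = 0 ∨ (p - 1) % 4 = 3) →
        ψ (6 * p + 4) = ((6 * p + 4) ^ 2 + 2 * (6 * p + 4) + 24) / 12) ∧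
      ((p - 1) % 4 = 1 →
        ψ (6 * p + 4) = ((6 * p + 4) ^ 2 + 2 * (6 * p + 4) + 12) / 12) ∧
      ((p - 1) % 4 = 2 →
        ψ (6 * p + 4) = ((6 * p + 4) ^ 2 + 2 * (6 * p + 4)) / 12)) ∧
    (∀ p : ℕ, 4 < p →
      ψ (6 * p + 4) - ψ (6 * p + 4 - 24) = 4 * (6 * p + 4 - 11)) := by
  have key : ∀ p : ℕ, 1 ≤ p →
      (((p - 1) % 4 = 0 ∨ (p - 1) % 4 = 3) → ψ (6 * p + 4) = 3 * p ^ 2 + 5 * p + 4) ∧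
      ((p - 1) % 4 = 1 → ψ (6 * p + 4) = 3 * p ^ 2 + 5 * p + 3) ∧
      ((p - 1) % 4 = 2 → ψ (6 * p + 4) = 3 * p ^ 2 + 5 * p + 2) := by
    intro p hp
    induction p, hp using Nat.le_induction with
    | base => refine ⟨fun _ => ?_, fun h => by omega, fun h => by omega⟩; simpa using h10
    | succ p hp ih =>
      obtain ⟨h0, h12, h3⟩ := hrec (p + 1) (by omega)
      have e6 : 6 * (p + 1) + 4 - 6 = 6 * p + 4 := by omega
      rw [e6] at h0 h12 h3
      have hm : p % 4 = 0 ∨ p % 4 = 1 ∨ p % 4 = 2 ∨ p % 4 = 3 := by omega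
      have hp1 : (p + 1 - 1) % 4 = p % 4 := by omega
      rcases hm with h | h | h | h
      · -- prev r = 3, new r = 0
        have hv := ih.1 (Or.inr (by omega))
        refine ⟨fun _ => ?_, fun hc => by omega, fun hc => by omega⟩
        rw [h0 (by omega), hv]
        have : 6 * (p + 1) + 4 - 2 = 6 * p + 8 := by omega
        rw [this]; ring
      · -- prev r = 0, new r = 1
        have hv := ih.1 (Or.inl (by omega))
        refine ⟨fun hc => by omega, fun _ => ?_, fun hc => by omega⟩
        rw [h12 (Or.inl (by omega)), hv]
        have : 6 * (p + 1) + 4 - 3 = 6 * p + 7 := by omega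
        rw [this]; ring
      · -- prev r = 1, new r = 2
        have hv := ih.2.1 (by omega)
        refine ⟨fun hc => by omega, fun hc => by omega, fun _ => ?_⟩
        rw [h12 (Or.inr (by omega)), hv]
        have : 6 * (p + 1) + 4 - 3 = 6 * p + 7 := by omega
        rw [this]; ring
      · -- prev r = 2, new r = 3
        have hv := ih.2.2 (by omega)
        refine ⟨fun _ => ?_, fun hc => by omega, fun hc => by omega⟩
        rw [h3 (by omega), hv]; ring
  constructor
  · intro p hp
    obtain ⟨k0, k1, k2⟩ := key p hp
    refine ⟨fun h => ?_, fun h => ?_, fun h => ?_⟩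
    · rw [k0 h]; have : (6 * p + 4) ^ 2 + 2 * (6 * p + 4) + 24 = 12 * (3 * p ^ 2 + 5 * p + 4) := by ring
      omega
    · rw [k1 h]; have : (6 * p + 4) ^ 2 + 2 * (6 * p + 4) + 12 = 12 * (3 * p ^ 2 + 5 * p + 3) := by ring
      omega
    · rw [k2 h]; have : (6 * p + 4) ^ 2 + 2 * (6 * p + 4) = 12 * (3 * p ^ 2 + 5 * p + 2) := by ring
      omega
  · intro p hp
    obtain ⟨q, rfl⟩ := Nat.exists_eq_add_of_le (show 5 ≤ p by omega)
    set p := 5 + q with hpdef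
    have e24 : 6 * p + 4 - 24 = 6 * (p - 4) + 4 := by omega
    rw [e24]
    obtain ⟨k0, k1, k2⟩ := key p (by omega)
    obtain ⟨k0', k1', k2'⟩ := key (p - 4) (by omega)
    have hm : (p - 1) % 4 = 0 ∨ (p - 1) % 4 = 1 ∨ (p - 1) % 4 = 2 ∨ (p - 1) % 4 = 3 := by omega
    have hsame : (p - 4 - 1) % 4 = (p - 1) % 4 := by omega
    have hp4 : p - 4 = q + 1 := by omega
    have hsq : p ^ 2 = (p - 4) ^ 2 + 8 * q + 24 := by rw [hp4, hpdef]; ring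
    rcases hm with h | h | h | h
    · rw [k0 (Or.inl h), k0' (Or.inl (by omega))]; omega
    · rw [k1 h, k1' (by omega)]; omega
    · rw [k2 h, k2' (by omega)]; omega
    · rw [k0 (Or.inr h), k0' (Or.inr (by omega))]; omega
end

section
/- For every odd natural number n, there exists a domino configuration in the diamond D_n of cardinality ψ(n), where ψ(n) = (n² − 1)/12 if n ≡ 1 or 5 (mod 6) and ψ(n) = (n² − 9)/12 if n ≡ 3 (mod 6). That is: there is a finite set of dominos whose kernels lie in {(x, y) ∈ ℤ² : |x| + |y| ≤ (n − 1)/2}, which satisfies the hull–kernel exclusion rule, and which has at least ψ(n) elements. -/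
/-- A domino configuration in the diamond `D_n` (`n` odd): a finite set of
dominos (each a pair `(ω, e)` with `e ∈ {(1,0), (0,1)}`) whose kernels lie in
the inner diamond `{(x, y) : |x| + |y| ≤ (n − 1)/2}`, such that the footprint of
any domino is disjoint from the kernel of any other domino. -/
def IsDiamondConfig (n : ℕ) (C : Finset ((ℤ × ℤ) × (ℤ × ℤ))) : Prop :=
  (∀ d ∈ C, d.2 = (1, 0) ∨ d.2 = (0, 1)) ∧
  (∀ d ∈ C, kernel d ⊆ {p : ℤ × ℤ | |p.1| + |p.2| ≤ (((n - 1) / 2 : ℕ) : ℤ)}) ∧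
  (∀ d ∈ C, ∀ d' ∈ C, d ≠ d' → footprint d ∩ kernel d' = ∅)

/-- The lower bound `ψ n` for the maximal number of dominos in the diamond `D_n`
(`n` odd): `(n² − 1)/12` if `n ≡ 1` or `5 (mod 6)`, `(n² − 9)/12` if `n ≡ 3 (mod 6)`. -/
def psiOdd (n : ℕ) : ℕ :=
  if n % 6 = 1 ∨ n % 6 = 5 then (n ^ 2 - 1) / 12 else (n ^ 2 - 9) / 12

/-- number of dominos in a row whose usable half-length is `k` -/
def cfun (k : ℕ) : ℕ := (2*k+2)/3

/-- usable half-length of row `j` (rows indexed 0..2*(r/2)). -/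
def kf (r j : ℕ) : ℕ := r - 2 * ((j : ℤ) - ((r/2 : ℕ) : ℤ)).natAbs

/-- total number of dominos in our packing of the diamond of radius `r`. -/
def F (r : ℕ) : ℕ := ∑ j ∈ Finset.range (2*(r/2)+1), cfun (kf r j)

lemma sum_peel2 (g : ℕ → ℕ) (m : ℕ) :
    ∑ j ∈ Finset.range (m+2), g j
      = g 0 + g (m+1) + ∑ j ∈ Finset.range m, g (j+1) := by
  rw [show m+2 = (m+1)+1 by omega, Finset.sum_range_succ, Finset.sum_range_succ']
  ring

lemma sum_peel4 (g : ℕ → ℕ) (m : ℕ) :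
    ∑ j ∈ Finset.range (m+4), g j
      = g 0 + g 1 + g (m+2) + g (m+3) + ∑ j ∈ Finset.range m, g (j+2) := by
  rw [show m+4 = (((m+1)+1)+1)+1 by omega, Finset.sum_range_succ, Finset.sum_range_succ,
    Finset.sum_range_succ', Finset.sum_range_succ']
  ring

lemma F_step (r : ℕ) : F (r+3) = F r + (2*r+4) := by
  rcases Nat.even_or_odd r with ⟨t, h⟩ | ⟨t, h⟩
  · subst h
    unfold F
    rw [show 2*((t+t+3)/2)+1 = (2*t+1)+2 by omega, show 2*((t+t)/2)+1 = 2*t+1 by omega,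
      sum_peel2]
    have hsum : ∑ j ∈ Finset.range (2*t+1), cfun (kf (t+t+3) (j+1))
        = ∑ j ∈ Finset.range (2*t+1), (cfun (kf (t+t) j) + 2) := by
      refine Finset.sum_congr rfl (fun j hj => ?_)
      have hj' := Finset.mem_range.mp hj
      simp only [cfun, kf]
      omega
    rw [hsum, Finset.sum_add_distrib, Finset.sum_const, Finset.card_range, smul_eq_mul]
    have c0 : cfun (kf (t+t+3) 0) = 1 := by simp only [cfun, kf]; omega
    have c1 : cfun (kf (t+t+3) (2*t+1+1)) = 1 := by simp only [cfun, kf]; omega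
    rw [c0, c1]; ring
  · subst h
    unfold F
    rw [show 2*((2*t+1+3)/2)+1 = (2*t+1)+4 by omega, show 2*((2*t+1)/2)+1 = 2*t+1 by omega,
      sum_peel4]
    have hsum : ∑ j ∈ Finset.range (2*t+1), cfun (kf (2*t+1+3) (j+2))
        = ∑ j ∈ Finset.range (2*t+1), (cfun (kf (2*t+1) j) + 2) := by
      refine Finset.sum_congr rfl (fun j hj => ?_)
      have hj' := Finset.mem_range.mp hj
      simp only [cfun, kf]
      omega
    rw [hsum, Finset.sum_add_distrib, Finset.sum_const, Finset.card_range, smul_eq_mul]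
    have c0 : cfun (kf (2*t+1+3) 0) = 0 := by simp only [cfun, kf]; omega
    have c1 : cfun (kf (2*t+1+3) 1) = 2 := by simp only [cfun, kf]; omega
    have c2 : cfun (kf (2*t+1+3) (2*t+1+2)) = 2 := by simp only [cfun, kf]; omega
    have c3 : cfun (kf (2*t+1+3) (2*t+1+3)) = 0 := by simp only [cfun, kf]; omega
    rw [c0, c1, c2, c3]; ring

lemma F_closed (r : ℕ) : F r = (r*r + r + 2)/3 := by
  induction r using Nat.strong_induction_on with
  | _ r ih =>
    match r with
    | 0 => decide
    | 1 => decide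
    | 2 => decide
    | (m+3) =>
      rw [F_step, ih m (by omega)]
      have : (m+3)*(m+3) + (m+3) + 2 = (m*m + m + 2) + 3*(2*m+4) := by ring
      omega

lemma psi_le (r : ℕ) : psiOdd (2*r+1) ≤ F r := by
  rw [F_closed]
  unfold psiOdd
  have hsq : (2*r+1)^2 = 4*(r*r)+4*r+1 := by ring
  rw [hsq]
  obtain ⟨Q, hQ⟩ : ∃ Q, r*r = Q := ⟨_, rfl⟩
  rw [hQ]
  split_ifs <;> omega

/-- For every odd `n`, there exists a domino configuration in the diamond `D_n`
with at least `ψ n` dominos. -/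
theorem diamond_config_exists (n : ℕ) (hn : Odd n) :
    ∃ C : Finset ((ℤ × ℤ) × (ℤ × ℤ)),
      IsDiamondConfig n C ∧ psiOdd n ≤ C.card := by
  obtain ⟨r, hr⟩ : ∃ r, n = 2*r+1 := hn
  have hrn : (n - 1) / 2 = r := by omega
  set t := r / 2 with ht
  set dom : (Σ _ : ℕ, ℕ) → ((ℤ × ℤ) × (ℤ × ℤ)) := fun p =>
    ((3*(p.2 : ℤ) - (r : ℤ) + 2*((((p.1 : ℤ) - (t : ℤ)).natAbs : ℕ) : ℤ),
      2*(p.1 : ℤ) - 2*(t : ℤ)), (1, 0)) with hdom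
  set S : Finset (Σ _ : ℕ, ℕ) :=
    (Finset.range (2*t+1)).sigma (fun j => Finset.range (cfun (kf r j))) with hS
  have memS : ∀ p : (Σ _ : ℕ, ℕ), p ∈ S →
      p.1 ≤ 2*t ∧ 3*p.2 + 1 ≤ 2*(r - 2*(((p.1 : ℤ) - (t : ℤ)).natAbs)) ∧
        2*(((p.1 : ℤ) - (t : ℤ)).natAbs) ≤ r := by
    intro p hp
    rw [hS, Finset.mem_sigma, Finset.mem_range, Finset.mem_range] at hp
    obtain ⟨h1, h2⟩ := hp
    simp only [cfun, kf] at h2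
    omega
  refine ⟨S.image dom, ⟨?_, ?_, ?_⟩, ?_⟩
  · intro d hd
    simp only [Finset.mem_image] at hd
    obtain ⟨p, hp, rfl⟩ := hd
    left; rfl
  · intro d hd
    simp only [Finset.mem_image] at hd
    obtain ⟨p, hp, rfl⟩ := hd
    obtain ⟨h1, h2, h3⟩ := memS p hp
    intro q hq
    simp only [hdom, kernel, Set.mem_insert_iff, Set.mem_singleton_iff, Prod.ext_iff,
      Prod.mk_add_mk] at hq
    obtain ⟨q1, q2⟩ := q
    simp only [Set.mem_setOf_eq]
    rw [hrn]
    rw [Int.abs_eq_natAbs, Int.abs_eq_natAbs]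
    simp only at hq
    omega
  · intro d hd d' hd' hne
    simp only [Finset.mem_image] at hd hd'
    obtain ⟨p, hp, rfl⟩ := hd
    obtain ⟨p', hp', rfl⟩ := hd'
    obtain ⟨h1, h2, h3⟩ := memS p hp
    obtain ⟨h1', h2', h3'⟩ := memS p' hp'
    have hxy : ¬(3*(p.2 : ℤ) - (r : ℤ) + 2*((((p.1 : ℤ) - (t : ℤ)).natAbs : ℕ) : ℤ)
          = 3*(p'.2 : ℤ) - (r : ℤ) + 2*((((p'.1 : ℤ) - (t : ℤ)).natAbs : ℕ) : ℤ)
        ∧ 2*(p.1 : ℤ) - 2*(t : ℤ) = 2*(p'.1 : ℤ) - 2*(t : ℤ)) := by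
      rintro ⟨e1, e2⟩
      exact hne (by rw [hdom]; simp only; rw [e1, e2])
    ext ⟨z1, z2⟩
    simp only [hdom, footprint, kernel, moore, Set.mem_inter_iff, Set.mem_union,
      Set.mem_setOf_eq, Set.mem_insert_iff, Set.mem_singleton_iff, Prod.ext_iff,
      Prod.mk_add_mk, Set.mem_empty_iff_false, iff_false]
    rintro ⟨hf, hk⟩
    simp only [abs_le] at hf
    omega
  · have hcard : (S.image dom).card = S.card := by
      apply Finset.card_image_of_injOn
      intro p hp p' hp' he
      simp only [hdom, Prod.ext_iff] at he
      obtain ⟨⟨e1, e2⟩, -⟩ := he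
      obtain ⟨j, i⟩ := p
      obtain ⟨j', i'⟩ := p'
      simp only at e1 e2 ⊢
      have hj : j = j' := by omega
      subst hj
      have hi : i = i' := by omega
      subst hi
      rfl
    rw [hcard, hS, Finset.card_sigma]
    simp only [Finset.card_range]
    have : (∑ j ∈ Finset.range (2*t+1), cfun (kf r j)) = F r := by rw [F, ht]
    rw [this, hr]
    exact psi_le r
end
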